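/- Let a, b, c ∈ L with [i] ≠ 0 for all i ≥ 1 and ⟨c⟩_m ≠ 0 for all m, and let u : ℕ → L be the coefficient sequence of the Gauss-type hypergeometric function, u_m = (⟨a⟩_m·⟨b⟩_m)/(⟨c⟩_m·D_m). Then u satisfies the second-order Carlitz differential equation τ(d²u) − τ²(d²u) − c·(du) + (a + b − [1])·τ(du) − (ab)·u = 0, i.e. {τ(1 − τ)d² − (c − (a + b − [1])τ)d − ab}·₂F₁(a,b;c;·) = 0 (here −[1] is the element denoted [−1]^q in the integer-parameter case, since (x^{1/q} − x)^q = −[1]); equivalently, since Δ = τd, {(Δ − a)(Δ − b) − (Δ − c)d}u = 0. -/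

import Mathlib

/-- The Carlitz bracket `[i] = x^{q^i} - x`. -/
def br (q : ℕ) {L : Type*} [Field L] (x : L) (i : ℕ) : L := x ^ q ^ i - x

/-- The `q = p^v`-th root in a perfect field of characteristic `p`. -/
noncomputable def qRoot (p v : ℕ) {L : Type*} [Field L] [ExpChar L p] [PerfectRing L p]
    (y : L) : L :=
  (fun z : L => (frobeniusEquiv L p).symm z)^[v] y

/-- The Frobenius operator `τu = u^q` on coefficient sequences of
`𝔽_q`-linear power series `u(t) = Σ u_k t^{q^k}`. -/
def tauSeq (q : ℕ) {L : Type*} [Field L] (u : ℕ → L) : ℕ → L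
  | 0 => 0
  | k + 1 => u k ^ q

/-- The Carlitz difference operator `Δu(t) = u(xt) - x·u(t)` on coefficient sequences. -/
def deltaSeq (q : ℕ) {L : Type*} [Field L] (x : L) (u : ℕ → L) (k : ℕ) : L :=
  br q x k * u k

/-- The Carlitz derivative `d = τ⁻¹ ∘ Δ` on coefficient sequences:
`(du)_k = ([k+1]·u_{k+1})^{1/q}`. -/
noncomputable def dSeq (p v q : ℕ) {L : Type*} [Field L] [ExpChar L p] [PerfectRing L p]
    (x : L) (u : ℕ → L) (k : ℕ) : L :=
  qRoot p v (br q x (k + 1) * u (k + 1))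

/-- The Pochhammer-type symbol `⟨a⟩_m = ([0]-a)^{q^m} ([1]-a)^{q^{m-1}} ⋯ ([m-1]-a)^q`. -/
def poch (q : ℕ) {L : Type*} [Field L] (x a : L) (m : ℕ) : L :=
  ∏ k ∈ Finset.range m, (br q x k - a) ^ q ^ (m - k)

/-- The Carlitz factorial `D_0 = 1`, `D_m = [m]·D_{m-1}^q`. -/
def DD (q : ℕ) {L : Type*} [Field L] (x : L) : ℕ → L
  | 0 => 1
  | m + 1 => br q x (m + 1) * (DD q x m) ^ q

lemma qRoot_pow (p : ℕ) {L : Type*} [Field L] [ExpChar L p] [PerfectRing L p]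
    (v : ℕ) (y : L) : qRoot p v y ^ p ^ v = y := by
  induction v generalizing y with
  | zero => simp [qRoot]
  | succ n ih =>
    rw [qRoot, Function.iterate_succ_apply', pow_succ', pow_mul,
      frobeniusEquiv_symm_pow_p]
    exact ih y

lemma qRoot_pow_q {p v q : ℕ} (hq : q = p ^ v) {L : Type*} [Field L] [ExpChar L p]
    [PerfectRing L p] (y : L) : qRoot p v y ^ q = y := by
  rw [hq]; exact qRoot_pow p v y

lemma pow_q_inj {p v q : ℕ} (hq : q = p ^ v) (hq0 : q ≠ 0) {L : Type*} [Field L]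
    [ExpChar L p] [PerfectRing L p] {z w : L} (h : z ^ q = w ^ q) : z = w := by
  have h2 : (z - w) ^ q = 0 := by
    rw [hq] at h ⊢
    rw [sub_pow_expChar_pow, h, sub_self]
  exact sub_eq_zero.mp (pow_eq_zero_iff hq0 |>.mp h2)

lemma poch_succ (q : ℕ) {L : Type*} [Field L] (x a : L) (m : ℕ) :
    poch q x a (m + 1) = poch q x a m ^ q * (br q x m - a) ^ q := by
  rw [poch, poch, Finset.prod_range_succ, ← Finset.prod_pow]
  congr 1
  · refine Finset.prod_congr rfl fun k hk => ?_
    have hk' := Finset.mem_range.mp hk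
    rw [show m + 1 - k = (m - k) + 1 by omega, pow_succ, pow_mul]
  · simp

lemma br_pow {p v q : ℕ} (hq : q = p ^ v) {L : Type*} [Field L] [ExpChar L p] (x : L)
    (m : ℕ) : br q x m ^ q = br q x (m + 1) - br q x 1 := by
  subst hq
  rw [br, sub_pow_expChar_pow, ← pow_mul, ← pow_succ, br, br]
  ring

/-- The Gauss-type hypergeometric function satisfies the Carlitz differential
equation `τ(d²u) − τ²(d²u) − c·(du) + (a+b−[1])·τ(du) − ab·u = 0`, i.e.
`{τ(1−τ)d² − (c − (a+b−[1])τ)d − ab} ₂F₁(a,b;c;·) = 0`. -/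
theorem stmt19 {p v q : ℕ} (hp : p.Prime) (hv : 0 < v) (hq : q = p ^ v)
    {L : Type*} [Field L] [ExpChar L p] [PerfectRing L p] (x : L)
    (hbr : ∀ i : ℕ, 1 ≤ i → br q x i ≠ 0)
    (a b c : L) (hc : ∀ m : ℕ, poch q x c m ≠ 0)
    (u : ℕ → L)
    (hu : ∀ m : ℕ, u m = poch q x a m * poch q x b m / (poch q x c m * DD q x m)) :
    ∀ k : ℕ,
      tauSeq q (dSeq p v q x (dSeq p v q x u)) k
        - tauSeq q (tauSeq q (dSeq p v q x (dSeq p v q x u))) k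
        - c * dSeq p v q x u k
        + (a + b - br q x 1) * tauSeq q (dSeq p v q x u) k
        - a * b * u k
      = 0 := by
  have hq0 : q ≠ 0 := by subst hq; exact pow_ne_zero _ hp.pos.ne'
  -- [k] - c ≠ 0 for all k
  have hbc : ∀ k : ℕ, br q x k - c ≠ 0 := by
    intro k h
    apply hc (k + 1)
    rw [poch]
    apply Finset.prod_eq_zero (Finset.self_mem_range_succ k)
    rw [h, zero_pow]
    exact pow_ne_zero _ hq0
  have hDD : ∀ m : ℕ, DD q x m ≠ 0 := by
    intro m
    induction m with
    | zero => exact one_ne_zero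
    | succ n ih => exact mul_ne_zero (hbr (n + 1) (by omega)) (pow_ne_zero _ ih)
  -- key algebraic recurrence
  have key : ∀ k : ℕ, (br q x k - c) ^ q * (br q x (k + 1) * u (k + 1))
      = ((br q x k - a) * (br q x k - b) * u k) ^ q := by
    intro k
    rw [hu (k + 1), hu k, poch_succ q x a k, poch_succ q x b k, poch_succ q x c k,
      show DD q x (k + 1) = br q x (k + 1) * DD q x k ^ q from rfl]
    have h1 : br q x (k + 1) ≠ 0 := hbr (k + 1) (by omega)
    simp only [mul_pow, div_pow]
    field_simp [hbc k, hDD k, hc k, h1]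
  -- Carlitz-derivative relation
  have dru : ∀ k : ℕ, (br q x k - c) * dSeq p v q x u k
      = (br q x k - a) * (br q x k - b) * u k := by
    intro k
    apply pow_q_inj hq hq0
    rw [mul_pow, dSeq, qRoot_pow_q hq]
    exact key k
  have tau_d : ∀ k : ℕ, tauSeq q (dSeq p v q x u) (k + 1) = br q x (k + 1) * u (k + 1) := by
    intro k
    show dSeq p v q x u k ^ q = _
    rw [dSeq, qRoot_pow_q hq]
  have tau_d2 : ∀ k : ℕ, tauSeq q (dSeq p v q x (dSeq p v q x u)) (k + 1)
      = br q x (k + 1) * dSeq p v q x u (k + 1) := by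
    intro k
    show dSeq p v q x (dSeq p v q x u) k ^ q = _
    rw [dSeq, qRoot_pow_q hq]
  intro k
  match k with
  | 0 =>
    have h0 : br q x 0 = 0 := by simp [br]
    have h := dru 0
    rw [h0] at h
    simp only [tauSeq]
    linear_combination h
  | 1 =>
    have ht2 : tauSeq q (tauSeq q (dSeq p v q x (dSeq p v q x u))) 1 = 0 := by
      show (tauSeq q (dSeq p v q x (dSeq p v q x u)) 0) ^ q = 0
      show (0 : L) ^ q = 0
      exact zero_pow hq0
    rw [tau_d2 0, ht2, tau_d 0]
    linear_combination dru 1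
  | (k + 2) =>
    have ht2 : tauSeq q (tauSeq q (dSeq p v q x (dSeq p v q x u))) (k + 2)
        = (br q x (k + 1) ^ q) * (br q x (k + 2) * u (k + 2)) := by
      show (tauSeq q (dSeq p v q x (dSeq p v q x u)) (k + 1)) ^ q = _
      rw [tau_d2 k, mul_pow, dSeq, qRoot_pow_q hq]
    rw [tau_d2 (k + 1), ht2, tau_d (k + 1), br_pow hq]
    linear_combination dru (k + 2)
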